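/- arXiv:1511.08163 — 4 statements merged into one kernel-verified Lean document; each statement's English description precedes it below -/
import Mathlib

section
/- Let n ≥ 4 be an integer and let K_{6n} be given a red/blue edge-coloring that is (F_n, K_4)-free. If the red subgraph contains a clique of order 2n, then the vertex set of K_{6n} can be partitioned into three pairwise disjoint sets of size 2n, each of which is a red clique (i.e., the red subgraph contains a copy of 3K_{2n}). -/
open SimpleGraph

/-- The fan graph `Fₙ`: the join of a single vertex (the center, `none`) with `n`
pairwise disjoint edges (`some (i, a)` is matched with `some (i, !a)`). -/
def Fan (n : ℕ) : SimpleGraph (Option (Fin n × Bool)) where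
  Adj u v := u ≠ v ∧ (u = none ∨ v = none ∨ ∃ i a b, u = some (i, a) ∧ v = some (i, b))
  symm := ⟨by
    rintro u v ⟨h1, h2⟩
    exact ⟨h1.symm, by tauto⟩⟩
  loopless := ⟨by rintro u ⟨h1, -⟩; exact h1 rfl⟩

/-- `G` contains a subgraph isomorphic to the fan graph `Fₙ`. -/
def ContainsFan {V : Type*} (G : SimpleGraph V) (n : ℕ) : Prop :=
  ∃ f : Option (Fin n × Bool) ↪ V, ∀ u v, (Fan n).Adj u v → G.Adj (f u) (f v)

/-- `G` contains a subgraph isomorphic to `K₄`. -/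
def ContainsK4 {V : Type*} (G : SimpleGraph V) : Prop :=
  ∃ a b c d : V, G.Adj a b ∧ G.Adj a c ∧ G.Adj a d ∧ G.Adj b c ∧ G.Adj b d ∧ G.Adj c d

/-!
Let `K` be the red `K_{2n}` and `W` the remaining `4n` vertices. A vertex outside `K` with two red
neighbours `u, w ∈ K` would complete a red `Fₙ` centred at `u`, so it has at most one red neighbour
in `K`; hence any three vertices of `W` have a common blue neighbour in `K`, and as there is no
blue `K₄`, `W` spans no blue triangle. Inside `W` a red neighbourhood has at most `2n` vertices
(a greedy red matching would give a fan) and a blue neighbourhood is a red clique. If `W` had no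
red `K_{2n}`, the blue neighbourhood `M` of a vertex would be a maximal red clique with `2n - 1`
vertices, and a vertex `m ∈ M`, which has `2n` red neighbours, would be the centre of a red `Fₙ`.
So `W` contains a red `K_{2n}` `A`, and any two vertices of `W \ A` have a common blue neighbour in
`A`, which makes `W \ A` a red clique too.
-/

namespace FanK4

open Finset

variable {V : Type*} {R : SimpleGraph V} {S T W A C : Finset V} {c v w : V} {k n : ℕ}

/-- `S` contains `k` pairwise disjoint edges of `R`, the `i`-th one joining `f (i, true)` to
`f (i, false)`, indexed like the rim of `Fan`. -/
def MatchingIn (R : SimpleGraph V) (S : Finset V) (k : ℕ) : Prop :=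
  ∃ f : Fin k × Bool ↪ V, (∀ p, f p ∈ S) ∧ ∀ i, R.Adj (f (i, true)) (f (i, false))

theorem MatchingIn.mono (h : MatchingIn R S k) (hST : S ⊆ T) : MatchingIn R T k :=
  let ⟨f, hfS, hf⟩ := h
  ⟨f, fun p => hST (hfS p), hf⟩

theorem containsFan_of_matchingIn (hm : MatchingIn R S n) (hc : ∀ x ∈ S, R.Adj c x) :
    ContainsFan R n := by
  obtain ⟨f, hfS, hf⟩ := hm
  have hcf : c ∉ Set.range f := fun ⟨p, hp⟩ => (hc _ (hfS p)).ne hp.symm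
  refine ⟨f.optionElim c hcf, ?_⟩
  rintro u v ⟨huv, rfl | rfl | ⟨i, a, b, rfl, rfl⟩⟩
  · obtain _ | p := v
    · exact absurd rfl huv
    · exact hc _ (hfS p)
  · obtain _ | p := u
    · exact absurd rfl huv
    · exact (hc _ (hfS p)).symm
  · cases a <;> cases b <;> simp_all [(hf i).symm]

variable [DecidableEq V]

theorem MatchingIn.insert_edge (h : MatchingIn R S k) (hvw : R.Adj v w) (hv : v ∉ S)
    (hw : w ∉ S) : MatchingIn R (insert v (insert w S)) (k + 1) := by
  obtain ⟨f, hfS, hf⟩ := h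
  let g (p : Fin (k + 1) × Bool) : V :=
    Fin.lastCases (motive := fun _ => Bool → V) (cond · v w) (fun i b => f (i, b)) p.1 p.2
  have hfv (p) : f p ≠ v := fun h => hv (h ▸ hfS p)
  have hfw (p) : f p ≠ w := fun h => hw (h ▸ hfS p)
  have hg : g.Injective := by
    rintro ⟨i, a⟩ ⟨j, b⟩ hij
    induction i using Fin.lastCases <;> induction j using Fin.lastCases <;>
      cases a <;> cases b <;>
      simp_all [g, hvw.ne, hvw.ne.symm, (hfv _).symm, (hfw _).symm]
  refine ⟨⟨g, hg⟩, fun ⟨i, a⟩ => ?_, fun i => ?_⟩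
  · induction i using Fin.lastCases <;> cases a <;> simp [g, hfS]
  · induction i using Fin.lastCases <;> simp [g, hf, hvw]

/-- Greedy matching: if every `r`-subset of `S` spans an edge, `S` contains a matching missing
at most `r - 2` of its vertices. -/
theorem matchingIn_of_forall_exists_adj {r : ℕ}
    (hS : ∀ T ⊆ S, r ≤ T.card → ∃ a ∈ T, ∃ b ∈ T, R.Adj a b) (hcard : 2 * k + r ≤ S.card + 2) :
    MatchingIn R S k := by
  induction k generalizing S with
  | zero => exact ⟨Function.Embedding.ofIsEmpty, isEmptyElim, isEmptyElim⟩
  | succ k ih =>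
    obtain ⟨a, ha, b, hb, hab⟩ := hS S Subset.rfl (by omega)
    have hb' : b ∈ S.erase a := mem_erase.2 ⟨hab.ne.symm, hb⟩
    have hsub : (S.erase a).erase b ⊆ S := (erase_subset _ _).trans (erase_subset _ _)
    have hT := ih (fun T hT => hS T (hT.trans hsub)) (by
      rw [card_erase_of_mem hb', card_erase_of_mem ha]; omega)
    refine (hT.insert_edge hab (fun h => ?_) (notMem_erase _ _)).mono ?_
    · exact notMem_erase a _ (mem_of_mem_erase h)
    · exact insert_subset ha (insert_subset hb hsub)

theorem matchingIn_of_isClique (hS : R.IsClique (S : Set V)) (hcard : S.card = 2 * k) :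
    MatchingIn R S k := by
  refine matchingIn_of_forall_exists_adj (r := 2) (fun T hT hT2 => ?_) (by omega)
  obtain ⟨a, ha, b, hb, hab⟩ := one_lt_card.1 hT2
  exact ⟨a, ha, b, hb, hS (hT ha) (hT hb) hab⟩

theorem adj_of_compl_adj {x y z : V} (hW : Rᶜ.CliqueFreeOn W 3) (hx : x ∈ W) (hy : y ∈ W)
    (hz : z ∈ W) (hzx : Rᶜ.Adj z x) (hzy : Rᶜ.Adj z y) (hxy : x ≠ y) : R.Adj x y := by
  by_contra h
  refine hW (t := {z, x, y}) ?_ (is3Clique_triple_iff.2 ⟨hzx, hzy, ⟨hxy, h⟩⟩)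
  simp [Set.insert_subset_iff, hx, hy, hz]

theorem exists_adj_of_cliqueFreeOn (hW : Rᶜ.CliqueFreeOn W 3) (hcard : 3 ≤ W.card) :
    ∃ a ∈ W, ∃ b ∈ W, R.Adj a b := by
  obtain ⟨x, hx, y, hy, z, hz, hxy, hxz, hyz⟩ := two_lt_card.1 hcard
  by_contra! h
  exact h y hy z hz (adj_of_compl_adj hW hy hz hx ⟨hxy, h x hx y hy⟩ ⟨hxz, h x hx z hz⟩ hyz)

theorem card_le_of_forall_adj (hfan : ¬ContainsFan R n) (hS : Rᶜ.CliqueFreeOn S 3)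
    (hc : ∀ x ∈ S, R.Adj c x) : S.card ≤ 2 * n := by
  by_contra! h
  refine hfan (containsFan_of_matchingIn (matchingIn_of_forall_exists_adj (r := 3) ?_ ?_) hc)
  · exact fun T hT => exists_adj_of_cliqueFreeOn (CliqueFreeOn.subset _ (by simpa) hS)
  · omega

theorem matchingIn_insert_insert_of_isClique {p q : V}
    (hS : Rᶜ.CliqueFreeOn ↑(insert p (insert q C)) 3) (hC : R.IsClique (C : Set V))
    (hCcard : C.card = 2 * k) (hpC : p ∉ C) (hqC : q ∉ C) (hpq : p ≠ q)
    (hp : ∃ a ∈ C, Rᶜ.Adj p a) (hq : ∃ b ∈ C, Rᶜ.Adj q b) :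
    MatchingIn R (insert p (insert q C)) (k + 1) := by
  by_cases hred : R.Adj p q
  · exact (matchingIn_of_isClique hC hCcard).insert_edge hred hpC hqC
  obtain ⟨a, haC, hpa⟩ := hp
  obtain ⟨b, hbC, hqb⟩ := hq
  have hqa : R.Adj q a :=
    adj_of_compl_adj hS (by simp) (by simp [haC]) (by simp) ⟨hpq, hred⟩ hpa (by grind)
  have hpb : R.Adj p b :=
    adj_of_compl_adj hS (by simp) (by simp [hbC]) (by simp) ⟨hpq.symm, (hred ·.symm)⟩ hqb
      (by grind)
  have hab : a ≠ b := by rintro rfl; exact hpa.2 hpb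
  obtain ⟨j, rfl⟩ : ∃ j, k = j + 1 := ⟨k - 1, by grind [one_lt_card]⟩
  set D := (C.erase a).erase b
  have hDC : D ⊆ C := (erase_subset _ _).trans (erase_subset _ _)
  have hDcard : D.card = 2 * j := by
    rw [card_erase_of_mem (mem_erase.2 ⟨hab.symm, hbC⟩), card_erase_of_mem haC]; omega
  have hD := matchingIn_of_isClique (hC.subset (coe_subset.2 hDC)) hDcard
  refine ((hD.insert_edge hqa ?_ ?_).insert_edge hpb ?_ ?_).mono ?_ <;> grind

theorem card_filter_adj_le_one [DecidableRel R.Adj] (hfan : ¬ContainsFan R n)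
    (hA : R.IsClique (A : Set V)) (hAcard : A.card = 2 * n) (hv : v ∉ A) :
    (A.filter (R.Adj v)).card ≤ 1 := by
  refine card_le_one.2 fun u hu w hw => by_contra fun huw => hfan ?_
  rw [mem_filter] at hu hw
  obtain ⟨k, rfl⟩ : ∃ k, n = k + 1 :=
    ⟨n - 1, by have := one_lt_card.2 ⟨u, hu.1, w, hw.1, huw⟩; omega⟩
  set D := (A.erase u).erase w
  have hDA : D ⊆ A := (erase_subset _ _).trans (erase_subset _ _)
  have hDcard : D.card = 2 * k := by
    rw [card_erase_of_mem (mem_erase.2 ⟨Ne.symm huw, hw.1⟩), card_erase_of_mem hu.1]; omega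
  have hD := matchingIn_of_isClique (hA.subset (coe_subset.2 hDA)) hDcard
  refine containsFan_of_matchingIn (c := u)
    (hD.insert_edge hw.2 (fun h => hv (hDA h)) (notMem_erase _ _)) ?_
  simp only [mem_insert]
  rintro x (rfl | rfl | hx)
  · exact hu.2.symm
  · exact hA hu.1 hw.1 huw
  · exact hA hu.1 (hDA hx) (ne_of_mem_erase (mem_of_mem_erase hx)).symm

theorem exists_forall_compl_adj (hfan : ¬ContainsFan R n) (hA : R.IsClique (A : Set V))
    (hAcard : A.card = 2 * n) (hTA : Disjoint T A) (hT : T.card < 2 * n) :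
    ∃ a ∈ A, ∀ x ∈ T, Rᶜ.Adj x a := by
  classical
  have hcover : (T.biUnion fun x => A.filter (R.Adj x)).card < A.card := calc
    _ ≤ ∑ x ∈ T, (A.filter (R.Adj x)).card := card_biUnion_le
    _ ≤ ∑ _x ∈ T, 1 :=
      sum_le_sum fun x hx => card_filter_adj_le_one hfan hA hAcard (disjoint_left.1 hTA hx)
    _ < A.card := by simpa [hAcard] using hT
  obtain ⟨a, ha, haT⟩ := exists_mem_notMem_of_card_lt_card hcover
  refine ⟨a, ha, fun x hx => ⟨fun h => disjoint_left.1 hTA hx (h ▸ ha), fun h => haT ?_⟩⟩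
  exact mem_biUnion.2 ⟨x, hx, mem_filter.2 ⟨ha, h⟩⟩

theorem compl_cliqueFreeOn_compl_of_isClique (hn : 2 ≤ n) (hfan : ¬ContainsFan R n)
    (hK4 : ¬ContainsK4 Rᶜ) (hA : R.IsClique (A : Set V)) (hAcard : A.card = 2 * n) :
    Rᶜ.CliqueFreeOn (↑A)ᶜ 3 := by
  intro t ht h3
  obtain ⟨x, y, z, hxy, hxz, hyz, rfl⟩ := is3Clique_iff.1 h3
  have hTA : Disjoint {x, y, z} A := by
    rw [← disjoint_coe]; exact Set.subset_compl_iff_disjoint_right.1 ht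
  obtain ⟨a, -, ha⟩ :=
    exists_forall_compl_adj hfan hA hAcard hTA (card_le_three.trans_lt (by omega))
  exact hK4 ⟨a, x, y, z, (ha x (by simp)).symm, (ha y (by simp)).symm, (ha z (by simp)).symm,
    hxy, hxz, hyz⟩

theorem isClique_filter_compl_adj [DecidableRel R.Adj] (hW : Rᶜ.CliqueFreeOn W 3)
    (hv : v ∈ W) :
    R.IsClique (W.filter (Rᶜ.Adj v) : Set V) := by
  intro x hx y hy hxy
  rw [mem_coe, mem_filter] at hx hy
  exact adj_of_compl_adj hW hx.1 hy.1 hv hx.2 hy.2 hxy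

theorem card_filter_adj_add_card_filter_compl_adj [DecidableRel R.Adj] (hv : v ∈ W) :
    (W.filter (R.Adj v)).card + (W.filter (Rᶜ.Adj v)).card + 1 = W.card := by
  have hsplit : W.filter (¬R.Adj v ·) = insert v (W.filter (Rᶜ.Adj v)) := by
    ext x
    rcases eq_or_ne x v with rfl | hx
    · simp [hv]
    · simp [hx, compl_adj, hx.symm]
  rw [← card_filter_add_card_filter_not (s := W) (R.Adj v), hsplit,
    card_insert_of_notMem (by simp), add_assoc]

theorem containsFan_of_maximal_isClique [DecidableRel R.Adj] {M : Finset V} {m : V}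
    (hW : Rᶜ.CliqueFreeOn W 3) (hMW : M ⊆ W) (hM : R.IsClique (M : Set V))
    (hMcard : M.card = 2 * k + 1) (hmax : ∀ y ∈ W, y ∉ M → ∃ a ∈ M, Rᶜ.Adj y a) (hm : m ∈ M)
    (hN : 2 * k + 2 ≤ (W.filter (R.Adj m)).card) : ContainsFan R (k + 1) := by
  set N := W.filter (R.Adj m)
  set C := M.erase m
  have hCN : C ⊆ N := fun x hx => mem_filter.2
    ⟨hMW (mem_of_mem_erase hx), hM hm (mem_of_mem_erase hx) (ne_of_mem_erase hx).symm⟩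
  have hNC : 1 < (N \ C).card := by
    rw [card_sdiff_of_subset hCN, card_erase_of_mem hm]; omega
  obtain ⟨p, hp, q, hq, hpq⟩ := one_lt_card.1 hNC
  have houtside {y} (hy : y ∈ N \ C) : y ∈ W ∧ y ∉ C ∧ ∃ a ∈ C, Rᶜ.Adj y a := by
    obtain ⟨hyN, hyC⟩ := mem_sdiff.1 hy
    obtain ⟨hyW, hmy⟩ := mem_filter.1 hyN
    have hyM : y ∉ M := fun h => hyC (mem_erase.2 ⟨hmy.ne', h⟩)
    obtain ⟨a, haM, hya⟩ := hmax y hyW hyM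
    exact ⟨hyW, hyC, a, mem_erase.2 ⟨fun ham => hya.2 (ham ▸ hmy.symm), haM⟩, hya⟩
  obtain ⟨hpW, hpC, hpa⟩ := houtside hp
  obtain ⟨hqW, hqC, hqb⟩ := houtside hq
  have hS : insert p (insert q C) ⊆ N :=
    insert_subset (sdiff_subset hp) (insert_subset (sdiff_subset hq) hCN)
  refine containsFan_of_matchingIn (c := m) (matchingIn_insert_insert_of_isClique
    (CliqueFreeOn.subset _ ?_ hW) (hM.subset (coe_subset.2 (erase_subset _ _)))
    (by rw [card_erase_of_mem hm]; omega) hpC hqC hpq hpa hqb)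
    fun x hx => (mem_filter.1 (hS hx)).2
  exact coe_subset.2 (hS.trans (filter_subset _ _))

theorem exists_isClique_card_eq (hfan : ¬ContainsFan R n)
    (hW : Rᶜ.CliqueFreeOn W 3) (hWcard : W.card = 4 * n) :
    ∃ A ⊆ W, R.IsClique (A : Set V) ∧ A.card = 2 * n := by
  classical
  obtain _ | k := n
  · exact ⟨∅, empty_subset _, by simp, rfl⟩
  by_contra! hno
  have hsmall (A) (hAW : A ⊆ W) (hA : R.IsClique (A : Set V)) : A.card < 2 * (k + 1) := by
    by_contra! h
    obtain ⟨B, hBA, hB⟩ := exists_subset_card_eq h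
    exact hno B (hBA.trans hAW) (hA.subset (coe_subset.2 hBA)) hB
  have hred (v) : (W.filter (R.Adj v)).card ≤ 2 * (k + 1) :=
    card_le_of_forall_adj (c := v) hfan
      (CliqueFreeOn.subset _ (coe_subset.2 (filter_subset _ _)) hW) (by simp)
  have hblue (v) (hv : v ∈ W) : (W.filter (Rᶜ.Adj v)).card < 2 * (k + 1) :=
    hsmall _ (filter_subset _ _) (isClique_filter_compl_adj hW hv)
  obtain ⟨w, hw⟩ : W.Nonempty := card_pos.1 (by omega)
  have hMcard : (W.filter (Rᶜ.Adj w)).card = 2 * k + 1 := by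
    have := card_filter_adj_add_card_filter_compl_adj (R := R) hw
    have := hred w; have := hblue w hw; omega
  set M := W.filter (Rᶜ.Adj w)
  have hM : R.IsClique (M : Set V) := isClique_filter_compl_adj hW hw
  have hmax (y) (hyW : y ∈ W) (hyM : y ∉ M) : ∃ a ∈ M, Rᶜ.Adj y a := by
    by_contra! h
    refine (hsmall (insert y M) (insert_subset hyW (filter_subset _ _)) ?_).ne
      (by rw [card_insert_of_notMem hyM]; omega)
    rw [coe_insert, isClique_insert]
    exact ⟨hM, fun a ha hya => by_contra fun hr => h a ha ⟨hya, hr⟩⟩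
  obtain ⟨m, hm⟩ : M.Nonempty := card_pos.1 (by omega)
  have hmW : m ∈ W := (mem_filter.1 hm).1
  refine hfan (containsFan_of_maximal_isClique hW (filter_subset _ _) hM (by omega) hmax hm ?_)
  have := card_filter_adj_add_card_filter_compl_adj (R := R) hmW
  have := hblue m hmW; omega

theorem isClique_sdiff (hn : 2 ≤ n) (hfan : ¬ContainsFan R n) (hW : Rᶜ.CliqueFreeOn W 3)
    (hAW : A ⊆ W) (hA : R.IsClique (A : Set V)) (hAcard : A.card = 2 * n) :
    R.IsClique (↑(W \ A) : Set V) := by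
  intro x hx y hy hxy
  rw [mem_coe, mem_sdiff] at hx hy
  obtain ⟨a, haA, ha⟩ := exists_forall_compl_adj hfan hA hAcard (T := {x, y})
    (by simp [hx.2, hy.2]) (card_le_two.trans_lt (by omega))
  exact adj_of_compl_adj hW hx.1 hy.1 (hAW haA) (ha x (by simp)).symm (ha y (by simp)).symm hxy

end FanK4

open FanK4

/-- If the red subgraph of an `(Fₙ, K₄)`-free coloring of `K_{6n}` (`n ≥ 4`) contains
a clique of order `2n`, then the vertex set can be partitioned into three pairwise
disjoint red cliques of size `2n` (a red `3K_{2n}`). -/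
theorem red_clique_gives_three (n : ℕ) (hn : 4 ≤ n)
    (R : SimpleGraph (Fin (6 * n)))
    (hfree : ¬ ContainsFan R n ∧ ¬ ContainsK4 Rᶜ)
    (h : ∃ K : Finset (Fin (6 * n)), K.card = 2 * n ∧ R.IsClique ↑K) :
    ∃ A1 A2 A3 : Finset (Fin (6 * n)),
      Disjoint A1 A2 ∧ Disjoint A1 A3 ∧ Disjoint A2 A3 ∧
      A1.card = 2 * n ∧ A2.card = 2 * n ∧ A3.card = 2 * n ∧
      A1 ∪ A2 ∪ A3 = Finset.univ ∧
      R.IsClique ↑A1 ∧ R.IsClique ↑A2 ∧ R.IsClique ↑A3 := by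
  obtain ⟨hfan, hK4⟩ := hfree
  obtain ⟨K, hKcard, hK⟩ := h
  have hW : Rᶜ.CliqueFreeOn ↑Kᶜ 3 := by
    rw [Finset.coe_compl]
    exact compl_cliqueFreeOn_compl_of_isClique (by omega) hfan hK4 hK hKcard
  have hWcard : Kᶜ.card = 4 * n := by
    rw [Finset.card_compl, Fintype.card_fin, hKcard]; omega
  obtain ⟨A, hAW, hA, hAcard⟩ := exists_isClique_card_eq hfan hW hWcard
  refine ⟨K, A, Kᶜ \ A, disjoint_compl_right.mono_right hAW,
    disjoint_compl_right.mono_right Finset.sdiff_subset, Finset.disjoint_sdiff, hKcard,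
    hAcard, ?_, ?_, hK, hA, isClique_sdiff (by omega) hfan hW hAW hA hAcard⟩
  · rw [Finset.card_sdiff_of_subset hAW, hWcard, hAcard]; omega
  · rw [Finset.union_assoc, Finset.union_sdiff_of_subset hAW, Finset.union_compl]
end

section
/- Let n ≥ 4 be an integer and let K_{6n} be given a red/blue edge-coloring that is (F_n, K_4)-free. Then the clique number of the subgraph formed by the red edges is at least 2n − 2. -/
open SimpleGraph

/-!
Fix a vertex `v` and a maximum red matching `M` inside its red neighbourhood `N(v)`. Together with
`v`, a matching of size `n` would be a red `Fₙ`, so `|M| ≤ n - 1`; the unmatched vertices of `N(v)`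
are pairwise blue, so there are at most three of them. Hence `deg v ≤ 2n + 1`, and since no edge of
`M` can be exchanged for two edges to distinct unmatched vertices, `N(v)` spans at most `2n² - 2n`
red edges.

Now suppose every red clique has at most `2n - 3` vertices. The common blue neighbourhood of a blue
edge `uv` is a red clique, as there is no blue `K₄`; hence `|N(u) ∪ N(v)| ≥ 4n + 1`. So every degree
is `2n` or `2n + 1`, blue-adjacent vertices have at most one common red neighbour, and the vertices
of degree `2n` form a red clique, so at least `4n + 3` vertices have degree `2n + 1`. Counting, for
each `v`, the ordered pairs of red neighbours of `v` (equal, red-adjacent or blue-adjacent) gives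
`∑ deg(v)² ≤ 6n (4n² - 4n) + 36n² - 6n`, while the degrees force
`∑ deg(v)² ≥ 24n³ + (4n + 1)(4n + 3)`.
-/

open Finset

namespace SimpleGraph

variable {V : Type*}

theorem isIndepSet_commonNeighbors {H : SimpleGraph V} (hK4 : ¬ContainsK4 H) {u v : V}
    (huv : H.Adj u v) : H.IsIndepSet (H.commonNeighbors u v) := by
  intro x hx y hy _ hxy
  rw [mem_commonNeighbors] at hx hy
  exact hK4 ⟨u, v, x, y, huv, hx.1, hy.1, hx.2, hy.2, hxy⟩

theorem card_le_three_of_isClique [DecidableEq V] {H : SimpleGraph V} (hK4 : ¬ContainsK4 H)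
    {s : Finset V} (hs : H.IsClique (s : Set V)) : #s ≤ 3 := by
  by_contra! h
  obtain ⟨t, hts, ht⟩ := exists_subset_card_eq h
  obtain ⟨a, u, hau, rfl, hu⟩ := card_eq_succ.1 ht
  obtain ⟨b, c, d, hbc, hbd, hcd, rfl⟩ := card_eq_three.1 hu
  obtain ⟨hab, hac, had⟩ : a ≠ b ∧ a ≠ c ∧ a ≠ d := by simpa [not_or] using hau
  refine hK4 ⟨a, b, c, d, ?_, ?_, ?_, ?_, ?_, ?_⟩ <;>
    exact hs (hts (by simp)) (hts (by simp)) (by assumption)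

section AdjPairs

variable (G : SimpleGraph V) [DecidableRel G.Adj]

def adjPairs (s : Finset V) : Finset (V × V) := (s ×ˢ s).filter fun p => G.Adj p.1 p.2

theorem card_adjPairs_eq_sum (s : Finset V) :
    #(G.adjPairs s) = ∑ x ∈ s, #(s.filter (G.Adj x)) := by
  rw [adjPairs, card_filter, sum_product]
  simp only [card_filter]

theorem card_adjPairs_univ [Fintype V] : #(G.adjPairs univ) = ∑ v, G.degree v := by
  simp only [card_adjPairs_eq_sum, ← card_neighborFinset_eq_degree, neighborFinset_eq_filter]

variable [DecidableEq V]

theorem card_add_card_adjPairs_add_card_adjPairs_compl (s : Finset V) :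
    #s + #(G.adjPairs s) + #(Gᶜ.adjPairs s) = #s * #s := by
  have hadj := card_filter_add_card_filter_not (s := s ×ˢ s) (fun p => G.Adj p.1 p.2)
  have hdiag := card_filter_add_card_filter_not
    (s := (s ×ˢ s).filter fun p => ¬G.Adj p.1 p.2) (fun p => p.1 = p.2)
  have hdiag_eq : ((s ×ˢ s).filter fun p => ¬G.Adj p.1 p.2).filter (fun p => p.1 = p.2)
      = s.diag := by
    ext ⟨x, y⟩
    simp only [mem_filter, mem_product, mem_diag]
    constructor
    · rintro ⟨⟨⟨hx, -⟩, -⟩, rfl⟩; exact ⟨hx, rfl⟩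
    · rintro ⟨hx, rfl⟩; exact ⟨⟨⟨hx, hx⟩, G.irrefl⟩, rfl⟩
  have hcompl_eq : ((s ×ˢ s).filter fun p => ¬G.Adj p.1 p.2).filter (fun p => ¬p.1 = p.2)
      = Gᶜ.adjPairs s := by
    ext ⟨x, y⟩
    simp only [adjPairs, mem_filter, compl_adj]
    tauto
  rw [hdiag_eq, hcompl_eq, diag_card] at hdiag
  rw [card_product] at hadj
  rw [adjPairs]
  omega

theorem sum_card_adjPairs_compl_neighborFinset_le [Fintype V]
    (h : ∀ u v, Gᶜ.Adj u v → #(G.neighborFinset u ∩ G.neighborFinset v) ≤ 1) :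
    ∑ v, #(Gᶜ.adjPairs (G.neighborFinset v)) ≤ #(Gᶜ.adjPairs univ) := by
  let r : V → V × V → Prop := fun v p => G.Adj v p.1 ∧ G.Adj v p.2
  calc ∑ v, #(Gᶜ.adjPairs (G.neighborFinset v))
      = ∑ v, #(bipartiteAbove r (Gᶜ.adjPairs univ) v) := by
        refine sum_congr rfl fun v _ => congrArg card ?_
        ext p
        simp [adjPairs, bipartiteAbove, r]
        tauto
    _ = ∑ p ∈ Gᶜ.adjPairs univ, #(bipartiteBelow r univ p) :=
        sum_card_bipartiteAbove_eq_sum_card_bipartiteBelow r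
    _ ≤ ∑ p ∈ Gᶜ.adjPairs univ, 1 := by
        refine sum_le_sum fun p hp => ?_
        have hbelow : bipartiteBelow r univ p = G.neighborFinset p.1 ∩ G.neighborFinset p.2 := by
          ext w
          simp [bipartiteBelow, r, adj_comm]
        rw [hbelow]
        exact h p.1 p.2 (mem_filter.1 hp).2
    _ = #(Gᶜ.adjPairs univ) := by rw [card_eq_sum_ones]

theorem sum_degree_sq_add_card_le [Fintype V]
    (h : ∀ u v, Gᶜ.Adj u v → #(G.neighborFinset u ∩ G.neighborFinset v) ≤ 1) :
    ∑ v, G.degree v ^ 2 + Fintype.card V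
      ≤ Fintype.card V * Fintype.card V + ∑ v, #(G.adjPairs (G.neighborFinset v)) := by
  have hsplit : ∑ v, G.degree v ^ 2 = ∑ v, G.degree v + ∑ v, #(G.adjPairs (G.neighborFinset v))
      + ∑ v, #(Gᶜ.adjPairs (G.neighborFinset v)) := by
    simp only [← sum_add_distrib, sq, ← card_neighborFinset_eq_degree]
    exact sum_congr rfl fun v _ => (G.card_add_card_adjPairs_add_card_adjPairs_compl _).symm
  have hblue := G.sum_card_adjPairs_compl_neighborFinset_le h
  have hglobal := G.card_add_card_adjPairs_add_card_adjPairs_compl univ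
  rw [card_univ, card_adjPairs_univ] at hglobal
  omega

theorem card_adjPairs_union_add_le {U I : Finset V} (hUI : Disjoint U I)
    (hI : G.IsIndepSet (I : Set V)) :
    #(G.adjPairs (U ∪ I)) + #U ≤ #U * #U + 2 * ∑ x ∈ U, #(I.filter (G.Adj x)) := by
  have hsplit : ∀ x, #((U ∪ I).filter (G.Adj x)) = #(U.filter (G.Adj x)) + #(I.filter (G.Adj x)) :=
    fun x => by rw [filter_union, card_union_of_disjoint (disjoint_filter_filter hUI)]
  have hU : ∀ x ∈ U, #(U.filter (G.Adj x)) + 1 ≤ #U := fun x hx =>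
    card_lt_card (filter_ssubset.2 ⟨x, hx, G.irrefl⟩)
  have hI0 : ∀ x ∈ I, #(I.filter (G.Adj x)) = 0 := fun x hx =>
    card_eq_zero.2 (filter_eq_empty_iff.2 fun y hy hxy => hI hx hy (G.ne_of_adj hxy) hxy)
  have hswap : ∑ x ∈ I, #(U.filter (G.Adj x)) = ∑ x ∈ U, #(I.filter (G.Adj x)) := by
    simpa [bipartiteAbove, bipartiteBelow, adj_comm] using
      sum_card_bipartiteAbove_eq_sum_card_bipartiteBelow G.Adj (s := I) (t := U)
  have hUsum := sum_le_sum hU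
  simp only [sum_add_distrib, sum_const, smul_eq_mul, mul_one] at hUsum
  rw [card_adjPairs_eq_sum, sum_union hUI]
  simp only [hsplit, sum_add_distrib]
  rw [sum_congr rfl hI0, sum_const_zero, hswap]
  omega

end AdjPairs

section Matching

variable [DecidableEq V] {G : SimpleGraph V} {s : Finset V} {P Q : Finset (V × V)} {a b : V}

def pairSupport (P : Finset (V × V)) : Finset V := P.biUnion fun p => {p.1, p.2}

theorem pairSupport_insert (p : V × V) (P : Finset (V × V)) :
    pairSupport (insert p P) = {p.1, p.2} ∪ pairSupport P :=
  biUnion_insert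

theorem pairSupport_mono (h : P ⊆ Q) : pairSupport P ⊆ pairSupport Q :=
  biUnion_subset_biUnion_of_subset_left _ h

theorem pair_subset_pairSupport {p : V × V} (hp : p ∈ P) : {p.1, p.2} ⊆ pairSupport P :=
  subset_biUnion_of_mem (fun p : V × V => ({p.1, p.2} : Finset V)) hp

theorem notMem_of_fst_notMem_pairSupport (ha : a ∉ pairSupport P) : (a, b) ∉ P :=
  fun h => ha (pair_subset_pairSupport h (mem_insert_self _ _))

structure IsMatchingIn (G : SimpleGraph V) (s : Finset V) (P : Finset (V × V)) : Prop where
  adj : ∀ p ∈ P, G.Adj p.1 p.2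
  pairwiseDisjoint : (P : Set (V × V)).PairwiseDisjoint fun p => ({p.1, p.2} : Finset V)
  pairSupport_subset : pairSupport P ⊆ s

def IsMaxMatchingIn (G : SimpleGraph V) (s : Finset V) (P : Finset (V × V)) : Prop :=
  G.IsMatchingIn s P ∧ ∀ Q, G.IsMatchingIn s Q → #Q ≤ #P

namespace IsMatchingIn

theorem mono (hP : G.IsMatchingIn s P) (hQ : Q ⊆ P) : G.IsMatchingIn s Q :=
  ⟨fun p hp => hP.adj p (hQ hp), hP.pairwiseDisjoint.subset (by exact_mod_cast hQ),
    (pairSupport_mono hQ).trans hP.pairSupport_subset⟩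

theorem card_pairSupport (hP : G.IsMatchingIn s P) : #(pairSupport P) = 2 * #P := by
  rw [pairSupport, card_biUnion hP.pairwiseDisjoint, mul_comm, ← smul_eq_mul, ← sum_const]
  exact sum_congr rfl fun p hp => card_pair (hP.adj p hp).ne

theorem insert (hP : G.IsMatchingIn s P) (hab : G.Adj a b) (ha : a ∈ s) (hb : b ∈ s)
    (ha' : a ∉ pairSupport P) (hb' : b ∉ pairSupport P) : G.IsMatchingIn s (insert (a, b) P) where
  adj := forall_mem_insert _ _ _ |>.2 ⟨hab, hP.adj⟩
  pairwiseDisjoint := by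
    rw [coe_insert]
    refine hP.pairwiseDisjoint.insert fun q hq _ => ?_
    refine disjoint_of_subset_right (pair_subset_pairSupport hq) ?_
    simp [ha', hb']
  pairSupport_subset := by
    rw [pairSupport_insert]
    exact union_subset (insert_subset ha (singleton_subset_iff.2 hb)) hP.pairSupport_subset

theorem disjoint_pairSupport_erase (hP : G.IsMatchingIn s P) {p : V × V} (hp : p ∈ P) :
    Disjoint {p.1, p.2} (pairSupport (P.erase p)) := by
  rw [pairSupport, disjoint_biUnion_right]
  intro q hq
  exact hP.pairwiseDisjoint hp (mem_of_mem_erase hq) (ne_of_mem_erase hq).symm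

end IsMatchingIn

theorem exists_isMaxMatchingIn (G : SimpleGraph V) (s : Finset V) : ∃ P, G.IsMaxMatchingIn s P := by
  classical
  have hempty : G.IsMatchingIn s ∅ := ⟨by simp, by simp, by simp [pairSupport]⟩
  obtain ⟨P, hP, hmax⟩ := exists_max_image (((s ×ˢ s).powerset).filter (G.IsMatchingIn s)) card
    ⟨∅, mem_filter.2 ⟨empty_mem_powerset _, hempty⟩⟩
  refine ⟨P, (mem_filter.1 hP).2, fun Q hQ => hmax Q (mem_filter.2 ⟨mem_powerset.2 ?_, hQ⟩)⟩
  intro q hq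
  have hsub := (pair_subset_pairSupport hq).trans hQ.pairSupport_subset
  exact mem_product.2 ⟨hsub (by simp), hsub (by simp)⟩

namespace IsMaxMatchingIn

theorem isIndepSet_sdiff (hP : G.IsMaxMatchingIn s P) : G.IsIndepSet ↑(s \ pairSupport P) := by
  intro x hx y hy _ hxy
  rw [mem_coe, mem_sdiff] at hx hy
  have := hP.2 _ (hP.1.insert hxy hx.1 hy.1 hx.2 hy.2)
  rw [card_insert_of_notMem (notMem_of_fst_notMem_pairSupport hx.2)] at this
  omega

theorem card_sdiff_le_three (hP : G.IsMaxMatchingIn s P) (hK4 : ¬ContainsK4 Gᶜ) :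
    #(s \ pairSupport P) ≤ 3 :=
  card_le_three_of_isClique hK4 ((isClique_compl G).2 hP.isIndepSet_sdiff)

theorem card_le (hP : G.IsMaxMatchingIn s P) (hK4 : ¬ContainsK4 Gᶜ) : #s ≤ 2 * #P + 3 := by
  have := card_sdiff_add_card_eq_card hP.1.pairSupport_subset
  have := hP.card_sdiff_le_three hK4
  rw [hP.1.card_pairSupport] at *
  omega

/-- Otherwise exchanging `p` for `(p.1, x)` and `(p.2, y)` would enlarge the matching. -/
theorem eq_of_adj (hP : G.IsMaxMatchingIn s P) {p : V × V} (hp : p ∈ P) {x y : V}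
    (hx : x ∈ s \ pairSupport P) (hy : y ∈ s \ pairSupport P) (hpx : G.Adj p.1 x)
    (hpy : G.Adj p.2 y) : x = y := by
  by_contra hxy
  rw [mem_sdiff] at hx hy
  have hQ := hP.1.mono (erase_subset p P)
  have hQsub := pairSupport_mono (erase_subset p P)
  have hdisj := hP.1.disjoint_pairSupport_erase hp
  have hp₁ : p.1 ∈ pairSupport P := pair_subset_pairSupport hp (by simp)
  have hp₂ : p.2 ∈ pairSupport P := pair_subset_pairSupport hp (by simp)
  have hp₁Q : p.1 ∉ pairSupport (P.erase p) := Finset.disjoint_left.1 hdisj (mem_insert_self _ _)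
  have hp₂Q : p.2 ∉ pairSupport (P.erase p) :=
    Finset.disjoint_left.1 hdisj (mem_insert_of_mem (mem_singleton_self _))
  have hQ₁ := hQ.insert hpy (hP.1.pairSupport_subset hp₂) hy.1 hp₂Q fun h => hy.2 (hQsub h)
  have hp₁' : p.1 ∉ pairSupport (insert (p.2, y) (P.erase p)) := by
    simp [pairSupport_insert, (hP.1.adj p hp).ne, ne_of_mem_of_not_mem hp₁ hy.2, hp₁Q]
  have hx' : x ∉ pairSupport (insert (p.2, y) (P.erase p)) := by
    have hxQ : x ∉ pairSupport (P.erase p) := fun h => hx.2 (hQsub h)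
    simp [pairSupport_insert, hxy, (ne_of_mem_of_not_mem hp₂ hx.2).symm, hxQ]
  have hQ₂ := hQ₁.insert hpx (hP.1.pairSupport_subset hp₁) hx.1 hp₁' hx'
  have hcard := hP.2 _ hQ₂
  rw [card_insert_of_notMem (notMem_of_fst_notMem_pairSupport hp₁'),
    card_insert_of_notMem (notMem_of_fst_notMem_pairSupport hp₂Q),
    card_erase_of_mem hp] at hcard
  have := card_pos.2 ⟨p, hp⟩
  omega

theorem card_filter_adj_add_card_filter_adj_le [DecidableRel G.Adj] (hP : G.IsMaxMatchingIn s P)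
    (hK4 : ¬ContainsK4 Gᶜ) {p : V × V} (hp : p ∈ P) :
    #((s \ pairSupport P).filter (G.Adj p.1)) + #((s \ pairSupport P).filter (G.Adj p.2)) ≤ 3 := by
  have hI := hP.card_sdiff_le_three hK4
  rcases ((s \ pairSupport P).filter (G.Adj p.1)).eq_empty_or_nonempty with hA | ⟨x, hx⟩
  · rw [hA, card_empty, zero_add]
    exact (card_filter_le _ _).trans hI
  rcases ((s \ pairSupport P).filter (G.Adj p.2)).eq_empty_or_nonempty with hB | ⟨y, hy⟩
  · rw [hB, card_empty, add_zero]
    exact (card_filter_le _ _).trans hI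
  rw [mem_filter] at hx hy
  have hA : #((s \ pairSupport P).filter (G.Adj p.1)) ≤ 1 := card_le_one.2 fun x₁ hx₁ x₂ hx₂ => by
    rw [mem_filter] at hx₁ hx₂
    rw [hP.eq_of_adj hp hx₁.1 hy.1 hx₁.2 hy.2, hP.eq_of_adj hp hx₂.1 hy.1 hx₂.2 hy.2]
  have hB : #((s \ pairSupport P).filter (G.Adj p.2)) ≤ 1 := card_le_one.2 fun y₁ hy₁ y₂ hy₂ => by
    rw [mem_filter] at hy₁ hy₂
    rw [← hP.eq_of_adj hp hx.1 hy₁.1 hx.2 hy₁.2, ← hP.eq_of_adj hp hx.1 hy₂.1 hx.2 hy₂.2]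
  omega

theorem card_adjPairs_le [DecidableRel G.Adj] (hP : G.IsMaxMatchingIn s P)
    (hK4 : ¬ContainsK4 Gᶜ) : #(G.adjPairs s) ≤ 4 * #P * #P + 4 * #P := by
  have hcross : ∑ x ∈ pairSupport P, #((s \ pairSupport P).filter (G.Adj x)) ≤ 3 * #P := by
    rw [pairSupport, sum_biUnion hP.1.pairwiseDisjoint]
    calc ∑ p ∈ P, ∑ x ∈ {p.1, p.2}, #((s \ pairSupport P).filter (G.Adj x))
        ≤ ∑ _p ∈ P, 3 := sum_le_sum fun p hp => by
          rw [sum_pair (hP.1.adj p hp).ne]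
          exact hP.card_filter_adj_add_card_filter_adj_le hK4 hp
      _ = 3 * #P := by rw [sum_const, smul_eq_mul, mul_comm]
  have h := G.card_adjPairs_union_add_le disjoint_sdiff hP.isIndepSet_sdiff
  rw [union_sdiff_of_subset hP.1.pairSupport_subset, hP.1.card_pairSupport] at h
  nlinarith

end IsMaxMatchingIn

end Matching

section Fan

variable [DecidableEq V] [Fintype V] {G : SimpleGraph V} [DecidableRel G.Adj] {P : Finset (V × V)}

theorem IsMatchingIn.containsFan {v : V} (hP : G.IsMatchingIn (G.neighborFinset v) P) :
    ContainsFan G #P := by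
  let e : Fin #P ≃ P := (P.equivFinOfCardEq rfl).symm
  let f : Fin #P × Bool → V := fun i => cond i.2 (e i.1).1.2 (e i.1).1.1
  have hf_mem : ∀ i, f i ∈ ({(e i.1).1.1, (e i.1).1.2} : Finset V) := by
    rintro ⟨i, _ | _⟩ <;> simp [f]
  have hf_adj : ∀ i, G.Adj (f (i, false)) (f (i, true)) := fun i => hP.adj _ (e i).2
  have hv_adj : ∀ i, G.Adj v (f i) := fun i => (mem_neighborFinset _ _ _).1
    (hP.pairSupport_subset (pair_subset_pairSupport (e i.1).2 (hf_mem i)))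
  have hf_inj : Function.Injective f := by
    rintro ⟨i, a⟩ ⟨j, b⟩ h
    obtain rfl : i = j := by
      by_contra hij
      have hne : (e i : V × V) ≠ e j := fun h' => hij (e.injective (Subtype.ext h'))
      exact Finset.disjoint_left.1 (hP.pairwiseDisjoint (e i).2 (e j).2 hne) (hf_mem (i, a))
        (h ▸ hf_mem (j, b))
    cases a <;> cases b
    · rfl
    · exact absurd h (hf_adj i).ne
    · exact absurd h.symm (hf_adj i).ne
    · rfl
  have hv : v ∉ Set.range f := by
    rintro ⟨i, hi⟩
    exact G.irrefl (hi ▸ hv_adj i)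
  refine ⟨(⟨f, hf_inj⟩ : Fin #P × Bool ↪ V).optionElim v hv, ?_⟩
  rintro (_ | ⟨i, a⟩) (_ | ⟨j, b⟩) ⟨hne, h⟩
  · exact absurd rfl hne
  · exact hv_adj (j, b)
  · exact (hv_adj (i, a)).symm
  · obtain rfl : j = i := by simpa using h
    cases a <;> cases b
    · exact absurd rfl hne
    · exact hf_adj _
    · exact (hf_adj _).symm
    · exact absurd rfl hne

theorem IsMaxMatchingIn.card_lt_of_not_containsFan {v : V} {n : ℕ}
    (hP : G.IsMaxMatchingIn (G.neighborFinset v) P) (hfan : ¬ContainsFan G n) : #P < n := by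
  by_contra! h
  obtain ⟨Q, hQP, rfl⟩ := exists_subset_card_eq h
  exact hfan (hP.1.mono hQP).containsFan

variable {n : ℕ}

theorem degree_le_of_not_containsFan (hfan : ¬ContainsFan G n) (hK4 : ¬ContainsK4 Gᶜ) (v : V) :
    G.degree v ≤ 2 * n + 1 := by
  obtain ⟨P, hP⟩ := exists_isMaxMatchingIn G (G.neighborFinset v)
  have := hP.card_le hK4
  have := hP.card_lt_of_not_containsFan hfan
  rw [card_neighborFinset_eq_degree] at *
  omega

theorem card_adjPairs_neighborFinset_add_le (hfan : ¬ContainsFan G n) (hK4 : ¬ContainsK4 Gᶜ)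
    (v : V) : #(G.adjPairs (G.neighborFinset v)) + 4 * n ≤ 4 * n * n := by
  obtain ⟨P, hP⟩ := exists_isMaxMatchingIn G (G.neighborFinset v)
  have := hP.card_adjPairs_le hK4
  have := hP.card_lt_of_not_containsFan hfan
  nlinarith

end Fan

section CliqueNum

variable [DecidableEq V] [Fintype V] {R : SimpleGraph V} [DecidableRel R.Adj] {u v : V}

theorem card_le_card_union_neighborFinset_add_cliqueNum (hK4 : ¬ContainsK4 Rᶜ)
    (huv : Rᶜ.Adj u v) :
    Fintype.card V ≤ #(R.neighborFinset u ∪ R.neighborFinset v) + R.cliqueNum + 2 := by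
  set C := Rᶜ.neighborFinset u ∩ Rᶜ.neighborFinset v
  have hC : R.IsClique (C : Set V) := by
    have := isIndepSet_commonNeighbors hK4 huv
    rw [← isClique_compl, compl_compl] at this
    simpa [C, commonNeighbors] using this
  have hcover : univ ⊆ insert u (insert v ((R.neighborFinset u ∪ R.neighborFinset v) ∪ C)) := by
    intro w _
    simp only [C, mem_insert, mem_union, mem_inter, mem_neighborFinset, compl_adj]
    tauto
  calc Fintype.card V = #univ := card_univ.symm
    _ ≤ #((R.neighborFinset u ∪ R.neighborFinset v) ∪ C) + 2 := by
        have := card_le_card hcover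
        have := card_insert_le u (insert v ((R.neighborFinset u ∪ R.neighborFinset v) ∪ C))
        have := card_insert_le v ((R.neighborFinset u ∪ R.neighborFinset v) ∪ C)
        omega
    _ ≤ #(R.neighborFinset u ∪ R.neighborFinset v) + R.cliqueNum + 2 := by
        have := card_union_le (R.neighborFinset u ∪ R.neighborFinset v) C
        have := hC.card_le_cliqueNum
        omega

variable {n : ℕ}

theorem four_mul_add_one_le_card_union (hV : Fintype.card V = 6 * n) (hK4 : ¬ContainsK4 Rᶜ)
    (hω : R.cliqueNum + 3 ≤ 2 * n) (huv : Rᶜ.Adj u v) :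
    4 * n + 1 ≤ #(R.neighborFinset u ∪ R.neighborFinset v) := by
  have := card_le_card_union_neighborFinset_add_cliqueNum hK4 huv
  omega

theorem card_inter_neighborFinset_le_one (hV : Fintype.card V = 6 * n) (hfan : ¬ContainsFan R n)
    (hK4 : ¬ContainsK4 Rᶜ) (hω : R.cliqueNum + 3 ≤ 2 * n) (huv : Rᶜ.Adj u v) :
    #(R.neighborFinset u ∩ R.neighborFinset v) ≤ 1 := by
  have := card_union_add_card_inter (R.neighborFinset u) (R.neighborFinset v)
  have := four_mul_add_one_le_card_union hV hK4 hω huv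
  have := degree_le_of_not_containsFan hfan hK4 u
  have := degree_le_of_not_containsFan hfan hK4 v
  rw [card_neighborFinset_eq_degree, card_neighborFinset_eq_degree] at *
  omega

theorem two_mul_le_degree (hV : Fintype.card V = 6 * n) (hfan : ¬ContainsFan R n)
    (hK4 : ¬ContainsK4 Rᶜ) (hω : R.cliqueNum + 3 ≤ 2 * n) (v : V) : 2 * n ≤ R.degree v := by
  have hdeg := degree_le_of_not_containsFan hfan hK4
  obtain ⟨u, hu⟩ : (Rᶜ.neighborFinset v).Nonempty := by
    rw [← card_pos, card_neighborFinset_eq_degree, degree_compl, hV]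
    have := hdeg v
    omega
  have := four_mul_add_one_le_card_union hV hK4 hω ((mem_neighborFinset _ _ _).1 hu)
  have := card_union_le (R.neighborFinset v) (R.neighborFinset u)
  have := hdeg u
  rw [card_neighborFinset_eq_degree, card_neighborFinset_eq_degree] at *
  omega

theorem isClique_setOf_degree_eq (hV : Fintype.card V = 6 * n) (hK4 : ¬ContainsK4 Rᶜ)
    (hω : R.cliqueNum + 3 ≤ 2 * n) : R.IsClique {v | R.degree v = 2 * n} := by
  intro u (hu : R.degree u = 2 * n) v (hv : R.degree v = 2 * n) huv
  by_contra h
  have := four_mul_add_one_le_card_union hV hK4 hω ((compl_adj R u v).2 ⟨huv, h⟩)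
  have := card_union_le (R.neighborFinset u) (R.neighborFinset v)
  rw [card_neighborFinset_eq_degree, card_neighborFinset_eq_degree] at this
  omega

theorem false_of_cliqueNum_add_three_le (hV : Fintype.card V = 6 * n) (hfan : ¬ContainsFan R n)
    (hK4 : ¬ContainsK4 Rᶜ) (hω : R.cliqueNum + 3 ≤ 2 * n) : False := by
  have hdeg_le := degree_le_of_not_containsFan hfan hK4
  have hdeg_ge := two_mul_le_degree hV hfan hK4 hω
  set L := #(univ.filter fun v => R.degree v = 2 * n)
  have hL : L ≤ R.cliqueNum :=
    IsClique.card_le_cliqueNum (tc := by simpa using isClique_setOf_degree_eq hV hK4 hω)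
  have hsum : ∑ v, R.degree v + L = 6 * n * (2 * n + 1) := by
    have h v : R.degree v + (if R.degree v = 2 * n then 1 else 0) = 2 * n + 1 := by
      have := hdeg_le v; have := hdeg_ge v; split_ifs <;> omega
    rw [← Nat.cast_id L, ← sum_boole, ← sum_add_distrib, sum_congr rfl fun v _ => h v, sum_const,
      card_univ, hV, smul_eq_mul]
  have hsq :
      ∑ v, R.degree v ^ 2 + 6 * n * (2 * n * (2 * n + 1)) = (4 * n + 1) * ∑ v, R.degree v := by
    have h v : R.degree v ^ 2 + 2 * n * (2 * n + 1) = (4 * n + 1) * R.degree v := by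
      obtain h | h : R.degree v = 2 * n ∨ R.degree v = 2 * n + 1 := by
        have := hdeg_le v; have := hdeg_ge v; omega
      all_goals rw [h]; ring
    rw [mul_sum, ← sum_congr rfl fun v _ => h v, sum_add_distrib, sum_const, card_univ, hV,
      smul_eq_mul]
  have hsq_le := R.sum_degree_sq_add_card_le
    fun u v huv => card_inter_neighborFinset_le_one hV hfan hK4 hω huv
  rw [hV] at hsq_le
  have hred : ∑ v, #(R.adjPairs (R.neighborFinset v)) + 6 * n * (4 * n) ≤ 6 * n * (4 * n * n) := by
    have := sum_le_sum fun v (_ : v ∈ univ) => card_adjPairs_neighborFinset_add_le hfan hK4 v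
    rwa [sum_add_distrib, sum_const, sum_const, card_univ, hV, smul_eq_mul, smul_eq_mul] at this
  nlinarith

end CliqueNum

end SimpleGraph

theorem red_clique_number_lower_general (n : ℕ)
    (R : SimpleGraph (Fin (6 * n)))
    (hfree : ¬ ContainsFan R n ∧ ¬ ContainsK4 Rᶜ) :
    2 * n - 2 ≤ R.cliqueNum := by
  classical
  by_contra! h
  exact SimpleGraph.false_of_cliqueNum_add_three_le (Fintype.card_fin _) hfree.1 hfree.2 (by omega)

/-- In an `(Fₙ, K₄)`-free coloring of `K_{6n}` (`n ≥ 4`), the clique number of the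
red subgraph is at least `2n - 2`. -/
theorem red_clique_number_lower (n : ℕ) (hn : 4 ≤ n)
    (R : SimpleGraph (Fin (6 * n)))
    (hfree : ¬ ContainsFan R n ∧ ¬ ContainsK4 Rᶜ) :
    2 * n - 2 ≤ R.cliqueNum :=
  red_clique_number_lower_general n R hfree
end

section
/- Let n ≥ 4 be an integer. Let K_{6n} be given a red/blue edge-coloring that is (F_n, K_4)-free and suppose its vertex set is partitioned into three pairwise disjoint red cliques G_1, G_2, G_3 each of order 2n. Let w be a new vertex joined to some vertices of K_{6n} with red/blue colored edges such that the resulting coloring is still (F_n, K_4)-free. Then there is no permutation (i, j, k) of (1, 2, 3) such that w has at least 1 blue neighbor in G_i, at least 2 blue neighbors in G_j, and at least 3 blue neighbors in G_k. -/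
open SimpleGraph

/-- Extend a graph on `V` by one extra vertex (`none`) joined to the set `S`. -/
def extendGraph {V : Type*} (G : SimpleGraph V) (S : Set V) : SimpleGraph (Option V) where
  Adj u v :=
    match u, v with
    | some a, some b => G.Adj a b
    | none, some a => a ∈ S
    | some a, none => a ∈ S
    | none, none => False
  symm := ⟨by rintro (_ | a) (_ | b) h <;> first | exact h | exact G.adj_symm h | exact G.symm h⟩
  loopless := ⟨by rintro (_ | a) h <;> first | exact h | exact G.irrefl h⟩

/-! If a vertex `v` outside a red clique `s` of order `2n` had two red neighbours `p ≠ q` in `s`,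
then `p` would be the center of a red `Fₙ` whose leaves are `v`, paired with `q`, and the
remaining `2n - 2` vertices of `s \ {p, q}`, paired arbitrarily. So every vertex has at most one
red neighbour in each part other than its own. Hence the blue neighbour `x` of `w` in `G_i` is
blue to one of the two in `G_j`, say `y`, and to two of the three in `G_k`, say `z, z'`. As
`w, x, y, z` is not a blue `K₄`, the edge `yz` is red, and so is `yz'`: two red neighbours of `y`
in `G_k`. -/

lemma containsFan_of_embedding {V : Type*} {G : SimpleGraph V} {n : ℕ} (c : V)
    (f : Fin n × Bool ↪ V) (hc : c ∉ Set.range f) (hadj : ∀ x, G.Adj c (f x))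
    (hpair : ∀ i, G.Adj (f (i, false)) (f (i, true))) : ContainsFan G n := by
  refine ⟨f.optionElim c hc, ?_⟩
  rintro (_ | ⟨i, a⟩) (_ | ⟨j, b⟩) ⟨hne, h⟩
  · exact absurd rfl hne
  · exact hadj _
  · exact (hadj _).symm
  · obtain rfl : i = j := by
      simp only [reduceCtorEq, Option.some.injEq, Prod.mk.injEq, false_or] at h
      obtain ⟨_, _, _, ⟨rfl, -⟩, rfl, -⟩ := h
      rfl
    cases a <;> cases b
    · exact absurd rfl hne
    · exact hpair i
    · exact (hpair i).symm
    · exact absurd rfl hne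

lemma Equiv.exists_apply_eq_and_apply_eq {α β : Type*} [DecidableEq α] (e : β ≃ α)
    {x y : β} (hxy : x ≠ y) {a b : α} (hab : a ≠ b) : ∃ e' : β ≃ α, e' x = a ∧ e' y = b := by
  set e₁ := e.trans (Equiv.swap (e x) a)
  have he₁ : e₁ x = a := by simp [e₁]
  refine ⟨e₁.trans (Equiv.swap (e₁ y) b), ?_, by simp⟩
  have hay : a ≠ e₁ y := he₁ ▸ e₁.injective.ne hxy
  simpa [he₁] using Equiv.swap_apply_of_ne_of_ne hay hab

lemma containsFan_of_isClique_of_adj_of_adj {V : Type*} {R : SimpleGraph V} {n : ℕ}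
    {s : Finset V} (hcard : s.card = 2 * n) (hclique : R.IsClique (s : Set V)) {v p q : V}
    (hv : v ∉ s) (hp : p ∈ s) (hq : q ∈ s) (hpq : p ≠ q) (hvp : R.Adj v p) (hvq : R.Adj v q) :
    ContainsFan R n := by
  classical
  set T := insert v (s.erase p)
  have hvT : v ∉ s.erase p := fun h => hv (Finset.mem_of_mem_erase h)
  have hn : 0 < n := by
    have := Finset.card_pos.mpr ⟨p, hp⟩
    omega
  have hTcard : T.card = 2 * n := by
    rw [Finset.card_insert_of_notMem hvT, Finset.card_erase_of_mem hp, hcard]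
    omega
  have e₀ : Fin n × Bool ≃ T :=
    Fintype.equivOfCardEq (by simp [hTcard, mul_comm])
  set i₀ : Fin n := ⟨0, hn⟩
  obtain ⟨e, hev, heq⟩ := e₀.exists_apply_eq_and_apply_eq (x := (i₀, false)) (y := (i₀, true))
    (by simp) (a := ⟨v, Finset.mem_insert_self _ _⟩)
    (b := ⟨q, Finset.mem_insert_of_mem (Finset.mem_erase.mpr ⟨hpq.symm, hq⟩)⟩)
    (by simpa using hvq.ne)
  have hmem : ∀ x, (e x : V) ≠ v → (e x : V) ∈ s.erase p := fun x hx =>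
    (Finset.mem_insert.mp (e x).2).resolve_left hx
  refine containsFan_of_embedding p (e.toEmbedding.trans (Function.Embedding.subtype _))
    ?_ ?_ ?_
  · rintro ⟨x, hx⟩
    have hpT : p ∉ T := by simp [T, hvp.ne']
    exact hpT (hx ▸ (e x).2)
  · intro x
    by_cases hx : (e x : V) = v
    · simpa [hx] using hvp.symm
    · have hx' := Finset.mem_erase.mp (hmem x hx)
      exact hclique hp hx'.2 (Ne.symm hx'.1)
  · intro i
    by_cases hi : i = i₀
    · simpa [hi, hev, heq] using hvq
    · have hne_v : ∀ b, (e (i, b) : V) ≠ v := fun b h => hi <|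
        congrArg Prod.fst (e.injective (Subtype.ext (h.trans (congrArg Subtype.val hev).symm)))
      have hne : (e (i, false) : V) ≠ e (i, true) := fun h => by
        simpa using e.injective (Subtype.ext h)
      exact hclique (Finset.mem_of_mem_erase (hmem _ (hne_v false)))
        (Finset.mem_of_mem_erase (hmem _ (hne_v true))) hne

lemma card_filter_adj_le_one_of_not_containsFan {V : Type*} {R : SimpleGraph V}
    [DecidableRel R.Adj] {n : ℕ} (hR : ¬ ContainsFan R n) {s t : Finset V}
    (hcard : s.card = 2 * n) (hclique : R.IsClique (s : Set V)) (hts : t ⊆ s) {v : V}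
    (hv : v ∉ s) : (t.filter (R.Adj v)).card ≤ 1 := by
  refine Finset.card_le_one.mpr fun p hp q hq => ?_
  rw [Finset.mem_filter] at hp hq
  by_contra hpq
  exact hR (containsFan_of_isClique_of_adj_of_adj hcard hclique hv (hts hp.1) (hts hq.1) hpq
    hp.2 hq.2)

lemma card_le_card_filter_not_add_one {α : Type*} {p : α → Prop} [DecidablePred p]
    {t : Finset α} (h : (t.filter p).card ≤ 1) : t.card ≤ (t.filter (¬ p ·)).card + 1 := by
  have := Finset.card_filter_add_card_filter_not (s := t) p
  omega

lemma containsK4_extendGraph {V : Type*} {H : SimpleGraph V} {S : Set V} {x y z : V}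
    (hx : x ∈ S) (hy : y ∈ S) (hz : z ∈ S) (hxy : H.Adj x y) (hxz : H.Adj x z)
    (hyz : H.Adj y z) : ContainsK4 (extendGraph H S) :=
  ⟨none, some x, some y, some z, hx, hy, hz, hxy, hxz, hyz⟩

lemma adj_of_not_containsK4_extendGraph_compl {V : Type*} {R : SimpleGraph V} {S : Set V}
    (hR : ¬ ContainsK4 (extendGraph Rᶜ S)) {x y z : V} (hx : x ∈ S) (hy : y ∈ S) (hz : z ∈ S)
    (hxy : x ≠ y) (hxz : x ≠ z) (hyz : y ≠ z) (hxy' : ¬ R.Adj x y) (hxz' : ¬ R.Adj x z) :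
    R.Adj y z := by
  by_contra hyz'
  exact hR (containsK4_extendGraph hx hy hz ⟨hxy, hxy'⟩ ⟨hxz, hxz'⟩ ⟨hyz, hyz'⟩)

theorem no_one_two_three_blue_general (n : ℕ)
    (R : SimpleGraph (Fin (6 * n)))
    (hfree : ¬ ContainsFan R n ∧ ¬ ContainsK4 Rᶜ)
    (G : Fin 3 → Finset (Fin (6 * n)))
    (hcard : ∀ i, (G i).card = 2 * n)
    (hdisj : ∀ i j, i ≠ j → Disjoint (G i) (G j))
    (hclique : ∀ i, R.IsClique ↑(G i))
    (RedN BlueN : Finset (Fin (6 * n)))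
    (hfree' : ¬ ContainsFan (extendGraph R ↑RedN) n ∧
      ¬ ContainsK4 (extendGraph Rᶜ ↑BlueN)) :
    ¬ ∃ σ : Equiv.Perm (Fin 3),
      1 ≤ (BlueN ∩ G (σ 0)).card ∧
      2 ≤ (BlueN ∩ G (σ 1)).card ∧
      3 ≤ (BlueN ∩ G (σ 2)).card := by
  classical
  rintro ⟨σ, h0, h1, h2⟩
  have hne : ∀ {i j : Fin 3}, i ≠ j → ∀ a ∈ G (σ i), ∀ b ∈ G (σ j), a ≠ b := fun hij =>
    Finset.disjoint_iff_ne.mp (hdisj _ _ (σ.injective.ne hij))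
  have hred : ∀ {i j : Fin 3}, i ≠ j → ∀ v ∈ G (σ i),
      ((BlueN ∩ G (σ j)).filter (R.Adj v)).card ≤ 1 := fun hij v hv =>
    card_filter_adj_le_one_of_not_containsFan hfree.1 (hcard _) (hclique _)
      Finset.inter_subset_right fun hv' => hne hij v hv v hv' rfl
  obtain ⟨x, hx⟩ := Finset.card_pos.mp h0
  rw [Finset.mem_inter] at hx
  obtain ⟨y, hy⟩ : ((BlueN ∩ G (σ 1)).filter (¬ R.Adj x ·)).Nonempty := by
    have := card_le_card_filter_not_add_one (hred (j := 1) (by decide) x hx.2)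
    exact Finset.card_pos.mp (by omega)
  obtain ⟨z, hz, z', hz', hzz'⟩ := Finset.one_lt_card.mp <|
    show 1 < ((BlueN ∩ G (σ 2)).filter (¬ R.Adj x ·)).card by
      have := card_le_card_filter_not_add_one (hred (j := 2) (by decide) x hx.2)
      omega
  simp only [Finset.mem_filter, Finset.mem_inter] at hy hz hz'
  have hyz : ∀ {u}, (u ∈ BlueN ∧ u ∈ G (σ 2)) ∧ ¬ R.Adj x u → R.Adj y u := fun hu =>
    adj_of_not_containsK4_extendGraph_compl hfree'.2 hx.1 hy.1.1 hu.1.1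
      (hne (by decide) _ hx.2 _ hy.1.2) (hne (by decide) _ hx.2 _ hu.1.2)
      (hne (by decide) _ hy.1.2 _ hu.1.2) hy.2 hu.2
  refine (hred (i := 1) (j := 2) (by decide) y hy.1.2).not_gt (Finset.one_lt_card.mpr ?_)
  exact ⟨z, by simp [hz.1, hyz hz], z', by simp [hz'.1, hyz hz'], hzz'⟩

/-- Let `K_{6n}` carry an `(Fₙ, K₄)`-free coloring partitioned into three red
cliques `G 0, G 1, G 2` of order `2n`, and extend it by a new vertex `w` with red
neighbors `RedN` and blue neighbors `BlueN`, still `(Fₙ, K₄)`-free. Then there is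
no permutation `σ` of the parts such that `w` has at least `1` blue neighbor in
`G (σ 0)`, at least `2` in `G (σ 1)` and at least `3` in `G (σ 2)`. -/
theorem no_one_two_three_blue (n : ℕ) (hn : 4 ≤ n)
    (R : SimpleGraph (Fin (6 * n)))
    (hfree : ¬ ContainsFan R n ∧ ¬ ContainsK4 Rᶜ)
    (G : Fin 3 → Finset (Fin (6 * n)))
    (hcard : ∀ i, (G i).card = 2 * n)
    (hdisj : ∀ i j, i ≠ j → Disjoint (G i) (G j))
    (hcover : ∀ v, ∃ i, v ∈ G i)
    (hclique : ∀ i, R.IsClique ↑(G i))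
    (RedN BlueN : Finset (Fin (6 * n))) (hdisjN : Disjoint RedN BlueN)
    (hfree' : ¬ ContainsFan (extendGraph R ↑RedN) n ∧
      ¬ ContainsK4 (extendGraph Rᶜ ↑BlueN)) :
    ¬ ∃ σ : Equiv.Perm (Fin 3),
      1 ≤ (BlueN ∩ G (σ 0)).card ∧
      2 ≤ (BlueN ∩ G (σ 1)).card ∧
      3 ≤ (BlueN ∩ G (σ 2)).card :=
  no_one_two_three_blue_general n R hfree G hcard hdisj hclique RedN BlueN hfree'
end

section
/- Let n ≥ 4 be an integer and let K_{6n} be given a red/blue edge-coloring that is (F_n, K_4)-free whose red subgraph contains three pairwise disjoint red cliques covering all vertices, each of order 2n, on parts A_1, A_2, A_3. Then all edges inside each A_i are red, and the blue subgraph is obtained from the complete tripartite graph K_{2n,2n,2n} on parts A_1, A_2, A_3 by deleting the edges of a (possibly empty) matching I_1 between A_1 and A_2, a matching I_2 between A_2 and A_3, and a matching I_3 between A_3 and A_1 (these deleted edges being red), where the red edges of I_1 ∪ I_2 ∪ I_3 contain no triangle. -/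
open SimpleGraph

/-!
If a vertex `u` of a red clique `S` of order `2n` has two red neighbours `v, w` outside `S`
with `vw` red, then `u` is the centre of a red `Fₙ`: the edge `vw` and `n - 1` disjoint pairs of
`S \ {u}` span the `n` triangles. In a `Fₙ`-free colouring with red cliques `A₁, A₂, A₃`, this
forces every vertex to have at most one red neighbour in each other part (any two of them would
be joined in red) and rules out red triangles meeting all three parts. Everything else is
bookkeeping.
-/

variable {V : Type*} {G : SimpleGraph V} {n : ℕ}

theorem containsFan_of_pairing {ι : Type*} (e : Fin n ↪ ι) (c : V) (p : ι × Bool → V)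
    (hp : Function.Injective p) (hcp : ∀ x, G.Adj c (p x))
    (hpair : ∀ i, G.Adj (p (i, false)) (p (i, true))) : ContainsFan G n := by
  let f : Option (Fin n × Bool) → V := fun x => x.elim c fun y => p (e y.1, y.2)
  have hf : Function.Injective f := by
    rintro (_ | ⟨i, a⟩) (_ | ⟨j, b⟩) h
    · rfl
    · exact absurd h (hcp _).ne
    · exact absurd h.symm (hcp _).ne
    · have h' : (e i, a) = (e j, b) := hp h
      obtain ⟨hij, rfl⟩ := Prod.ext_iff.mp h'
      rw [e.injective hij]
  refine ⟨⟨f, hf⟩, ?_⟩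
  rintro u v ⟨huv, rfl | rfl | ⟨i, a, b, rfl, rfl⟩⟩
  · obtain _ | y := v
    · exact absurd rfl huv
    · exact hcp _
  · obtain _ | y := u
    · exact absurd rfl huv
    · exact (hcp _).symm
  · cases a <;> cases b
    · exact absurd rfl huv
    · exact hpair _
    · exact (hpair _).symm
    · exact absurd rfl huv

variable [DecidableEq V] {S T : Finset V}

theorem containsFan_of_isClique_of_adj {u v w : V} (hS : G.IsClique S) (hcard : 2 * n ≤ S.card)
    (hu : u ∈ S) (hv : v ∉ S) (hw : w ∉ S) (huv : G.Adj u v) (huw : G.Adj u w)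
    (hvw : G.Adj v w) : ContainsFan G n := by
  cases n with
  | zero =>
    exact containsFan_of_pairing (.refl _) u (fun x => x.1.elim0) (fun x => x.1.elim0)
      (fun x => x.1.elim0) (fun i => i.elim0)
  | succ m =>
    have hcard' : Fintype.card (Fin m × Bool) ≤ Fintype.card (S.erase u) := by
      simp only [Fintype.card_prod, Fintype.card_fin, Fintype.card_bool, Fintype.card_coe,
        Finset.card_erase_of_mem hu]
      omega
    obtain ⟨q⟩ := Function.Embedding.nonempty_of_card_le hcard'
    have hqS (x : Fin m × Bool) : (q x : V) ∈ S := Finset.mem_of_mem_erase (q x).2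
    have hqu (x : Fin m × Bool) : (q x : V) ≠ u := Finset.ne_of_mem_erase (q x).2
    let p : Option (Fin m) × Bool → V
      | (none, a) => cond a w v
      | (some j, a) => q (j, a)
    have hp : Function.Injective p := by
      rintro ⟨_ | j, a⟩ ⟨_ | k, b⟩ h
      · cases a <;> cases b <;> first | rfl | exact absurd h hvw.ne | exact absurd h hvw.ne'
      · have h' : cond a w v = q (k, b) := h
        exact absurd (h' ▸ hqS _) (by cases a <;> assumption)
      · have h' : (q (j, a) : V) = cond b w v := h
        exact absurd (h' ▸ hqS _) (by cases b <;> assumption)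
      · obtain ⟨rfl, rfl⟩ := Prod.ext_iff.mp (q.injective (Subtype.coe_injective h))
        rfl
    refine containsFan_of_pairing (finSuccEquiv m).toEmbedding u p hp ?_ ?_
    · rintro ⟨_ | j, _ | _⟩
      exacts [huv, huw, hS hu (hqS _) (hqu _).symm, hS hu (hqS _) (hqu _).symm]
    · rintro (_ | j)
      · exact hvw
      · exact hS (hqS _) (hqS _) fun h => by
          simpa using q.injective (Subtype.coe_injective h)

theorem eq_of_adj_of_isClique (hfan : ¬ContainsFan G n) (hS : G.IsClique S)
    (hcard : 2 * n ≤ S.card) (hT : G.IsClique T) (hST : Disjoint S T) {u v w : V} (hu : u ∈ S)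
    (hv : v ∈ T) (hw : w ∈ T) (huv : G.Adj u v) (huw : G.Adj u w) : v = w := by
  by_contra hvw
  exact hfan <| containsFan_of_isClique_of_adj hS hcard hu (hST.notMem_of_mem_right_finset hv)
    (hST.notMem_of_mem_right_finset hw) huv huw (hT hv hw hvw)

theorem structure_of_free_colorings_general (n : ℕ)
    (R : SimpleGraph (Fin (6 * n)))
    (hfree : ¬ ContainsFan R n ∧ ¬ ContainsK4 Rᶜ)
    (A : Fin 3 → Finset (Fin (6 * n)))
    (hcard : ∀ i, (A i).card = 2 * n)
    (hdisj : ∀ i j, i ≠ j → Disjoint (A i) (A j))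
    (hcover : ∀ v, ∃ i, v ∈ A i)
    (hclique : ∀ i, R.IsClique ↑(A i)) :
    (∀ i, ∀ u ∈ A i, ∀ v ∈ A i, u ≠ v → R.Adj u v) ∧
    (∀ i j, i ≠ j → ∀ u ∈ A i, ∀ v ∈ A j, ∀ u' ∈ A i, ∀ v' ∈ A j,
      R.Adj u v → R.Adj u' v' → (u = u' ↔ v = v')) ∧
    (¬ ∃ (a b c : Fin (6 * n)) (i j k : Fin 3), i ≠ j ∧ j ≠ k ∧ i ≠ k ∧
      a ∈ A i ∧ b ∈ A j ∧ c ∈ A k ∧ R.Adj a b ∧ R.Adj b c ∧ R.Adj a c) ∧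
    (∀ u v : Fin (6 * n), Rᶜ.Adj u v ↔
      (∃ i j, i ≠ j ∧ u ∈ A i ∧ v ∈ A j) ∧ ¬ R.Adj u v) := by
  have hfan := hfree.1
  refine ⟨fun i u hu v hv => hclique i hu hv, ?_, ?_, fun u v => ?_⟩
  · intro i j hij u hu v hv u' hu' v' hv' huv hu'v'
    constructor
    · rintro rfl
      exact eq_of_adj_of_isClique hfan (hclique i) (hcard i).ge (hclique j) (hdisj i j hij)
        hu hv hv' huv hu'v'
    · rintro rfl
      exact eq_of_adj_of_isClique hfan (hclique j) (hcard j).ge (hclique i) (hdisj j i hij.symm)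
        hv hu hu' huv.symm hu'v'.symm
  · rintro ⟨a, b, c, i, j, k, hij, hjk, -, ha, hb, hc, hab, hbc, hac⟩
    exact hfan <| containsFan_of_isClique_of_adj (hclique j) (hcard j).ge hb
      ((hdisj j i hij.symm).notMem_of_mem_right_finset ha)
      ((hdisj j k hjk).notMem_of_mem_right_finset hc) hab.symm hbc hac
  · rw [compl_adj]
    constructor
    · rintro ⟨hne, hnadj⟩
      obtain ⟨i, hi⟩ := hcover u
      obtain ⟨j, hj⟩ := hcover v
      refine ⟨⟨i, j, fun hij => hnadj ?_, hi, hj⟩, hnadj⟩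
      exact hclique i hi (hij ▸ hj) hne
    · rintro ⟨⟨i, j, hij, hi, hj⟩, hnadj⟩
      exact ⟨fun huv => (hdisj i j hij).notMem_of_mem_left_finset hi (huv ▸ hj), hnadj⟩

/-- Structure of `(Fₙ, K₄)`-free colorings of `K_{6n}` whose red subgraph contains a
spanning `3K_{2n}` on parts `A 0, A 1, A 2`: all edges inside each part are red, the
red edges between any two distinct parts form a matching (the deleted edges of the
blue complete tripartite graph `K_{2n,2n,2n}`), these cross red edges contain no
triangle, and the blue subgraph consists exactly of the cross pairs that are not
red. -/
theorem structure_of_free_colorings (n : ℕ) (hn : 4 ≤ n)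
    (R : SimpleGraph (Fin (6 * n)))
    (hfree : ¬ ContainsFan R n ∧ ¬ ContainsK4 Rᶜ)
    (A : Fin 3 → Finset (Fin (6 * n)))
    (hcard : ∀ i, (A i).card = 2 * n)
    (hdisj : ∀ i j, i ≠ j → Disjoint (A i) (A j))
    (hcover : ∀ v, ∃ i, v ∈ A i)
    (hclique : ∀ i, R.IsClique ↑(A i)) :
    (∀ i, ∀ u ∈ A i, ∀ v ∈ A i, u ≠ v → R.Adj u v) ∧
    (∀ i j, i ≠ j → ∀ u ∈ A i, ∀ v ∈ A j, ∀ u' ∈ A i, ∀ v' ∈ A j,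
      R.Adj u v → R.Adj u' v' → (u = u' ↔ v = v')) ∧
    (¬ ∃ (a b c : Fin (6 * n)) (i j k : Fin 3), i ≠ j ∧ j ≠ k ∧ i ≠ k ∧
      a ∈ A i ∧ b ∈ A j ∧ c ∈ A k ∧ R.Adj a b ∧ R.Adj b c ∧ R.Adj a c) ∧
    (∀ u v : Fin (6 * n), Rᶜ.Adj u v ↔
      (∃ i j, i ≠ j ∧ u ∈ A i ∧ v ∈ A j) ∧ ¬ R.Adj u v) :=
  structure_of_free_colorings_general n R hfree A hcard hdisj hcover hclique
end
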